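/- arXiv:math/0609201 — 5 statements merged into one kernel-verified Lean document; each statement's English description precedes it below -/
import Mathlib

section
/- Balancing property of the propensity score (Rosenbaum–Rubin): the covariates X and the treatment indicator Z are conditionally independent given the σ-algebra generated by the propensity score e; that is, conditioning on e, the distribution of any measurable function of the background variables is the same in the treated and untreated groups. -/
/-! Write `Z` as the indicator of `B = {Z = 1}`; by a π-system argument it suffices to factor
`P(A ∩ B | e)` for `A ∈ σ(X)`. Since `σ(e) ⊆ σ(X)`, the tower property and pulling out `1_A` give
`P(A ∩ B | e) = E[1_A · P(B | X) | e] = E[1_A · e | e] = P(A | e) · e`, while `P(B | e) = e`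
because `e = P(B | X)` is already `σ(e)`-measurable. -/

open MeasureTheory ProbabilityTheory MeasurableSpace

namespace ProbabilityTheory

variable {Ω : Type*} {m₁ m₂ mΩ : MeasurableSpace Ω} {μ : Measure Ω} [IsFiniteMeasure μ]

lemma condExp_ae_eq_condExp_of_stronglyMeasurable_condExp (hm₂₁ : m₂ ≤ m₁) (hm₁ : m₁ ≤ mΩ)
    {f : Ω → ℝ} (hf : StronglyMeasurable[m₂] (μ[f | m₁])) :
    μ[f | m₂] =ᵐ[μ] μ[f | m₁] :=
  (condExp_condExp_of_le hm₂₁ hm₁).symm.trans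
    (condExp_of_stronglyMeasurable (hm₂₁.trans hm₁) hf integrable_condExp).eventuallyEq

lemma condExp_inter_ae_eq_mul_of_stronglyMeasurable_condExp (hm₂₁ : m₂ ≤ m₁)
    (hm₁ : m₁ ≤ mΩ) {A B : Set Ω} (hA : MeasurableSet[m₁] A) (hB : MeasurableSet B)
    (hBm : StronglyMeasurable[m₂] (μ⟦B | m₁⟧)) :
    μ⟦A ∩ B | m₂⟧ =ᵐ[μ] μ⟦A | m₂⟧ * μ⟦B | m₂⟧ := by
  have hint : ∀ {S : Set Ω}, MeasurableSet S → Integrable (S.indicator fun _ ↦ (1 : ℝ)) μ :=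
    fun hS ↦ (integrable_const 1).indicator hS
  have hA_eq : A.indicator (μ⟦B | m₁⟧) = A.indicator (fun _ ↦ 1) * μ⟦B | m₁⟧ := by
    ext ω
    by_cases hω : ω ∈ A <;> simp [hω]
  calc μ⟦A ∩ B | m₂⟧
      = μ[A.indicator (B.indicator fun _ ↦ 1) | m₂] := by rw [Set.indicator_indicator]
    _ =ᵐ[μ] μ[μ[A.indicator (B.indicator fun _ ↦ 1) | m₁] | m₂] :=
        (condExp_condExp_of_le hm₂₁ hm₁).symm
    _ =ᵐ[μ] μ[A.indicator (μ⟦B | m₁⟧) | m₂] := condExp_congr_ae (condExp_indicator (hint hB) hA)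
    _ =ᵐ[μ] μ⟦A | m₂⟧ * μ⟦B | m₁⟧ := by
        rw [hA_eq]
        exact condExp_mul_of_stronglyMeasurable_right hBm
          (hA_eq ▸ integrable_condExp.indicator (hm₁ A hA)) (hint (hm₁ A hA))
    _ =ᵐ[μ] μ⟦A | m₂⟧ * μ⟦B | m₂⟧ :=
        (condExp_ae_eq_condExp_of_stronglyMeasurable_condExp hm₂₁ hm₁ hBm).symm.mul_left

variable [StandardBorelSpace Ω]

theorem condIndep_generateFrom_singleton_of_stronglyMeasurable_condExp (hm₂₁ : m₂ ≤ m₁)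
    (hm₁ : m₁ ≤ mΩ) {B : Set Ω} (hB : MeasurableSet B)
    (hBm : StronglyMeasurable[m₂] (μ⟦B | m₁⟧)) :
    CondIndep m₂ m₁ (generateFrom {B}) (hm₂₁.trans hm₁) μ := by
  have hB' : ∀ S ∈ ({B} : Set (Set Ω)), MeasurableSet S := by simpa using hB
  refine CondIndepSets.condIndep hm₁ (generateFrom_le hB')
    (@isPiSystem_measurableSet Ω m₁) (IsPiSystem.singleton B)
    (@generateFrom_measurableSet Ω m₁).symm rfl ?_
  rw [condIndepSets_iff m₂ (hm₂₁.trans hm₁) {S | MeasurableSet[m₁] S} {B}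
    (fun S hS ↦ hm₁ S hS) hB']
  rintro A _ hA rfl
  exact condExp_inter_ae_eq_mul_of_stronglyMeasurable_condExp hm₂₁ hm₁ hA hB hBm

end ProbabilityTheory

/-- Balancing property of the propensity score (Rosenbaum–Rubin): the covariates `X` and the
treatment indicator `Z` are conditionally independent given the σ-algebra generated by the
propensity score `e := 𝔼[Z | σ(X)]`. -/
theorem condIndepFun_covariates_treatment_given_propensity
    {Ω : Type*} [MeasurableSpace Ω] [StandardBorelSpace Ω]
    (μ : Measure Ω) [IsProbabilityMeasure μ]
    {d : ℕ} (X : Ω → (Fin d → ℝ)) (Z : Ω → ℝ)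
    (hX : Measurable X) (hZ : Measurable Z)
    (hZ01 : ∀ ω, Z ω = 0 ∨ Z ω = 1)
    (e : Ω → ℝ) (he : e = μ[Z | MeasurableSpace.comap X inferInstance])
    (hme : MeasurableSpace.comap e inferInstance ≤ ‹MeasurableSpace Ω›) :
    CondIndepFun (MeasurableSpace.comap e inferInstance) hme X Z μ := by
  set B := Z ⁻¹' {1}
  have hZB : Z = B.indicator fun _ ↦ 1 := by
    funext ω
    rcases hZ01 ω with h | h <;> simp [B, h]
  have hBe : μ⟦B | MeasurableSpace.comap X inferInstance⟧ = e := by rw [← hZB, he]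
  have heX : MeasurableSpace.comap e inferInstance ≤ MeasurableSpace.comap X inferInstance := by
    rw [he]; exact stronglyMeasurable_condExp.measurable.comap_le
  have hZgen : MeasurableSpace.comap Z inferInstance ≤ generateFrom {B} := by
    rw [hZB]
    exact ((measurable_const (a := (1 : ℝ))).indicator
      (measurableSet_generateFrom (Set.mem_singleton B))).comap_le
  rw [condIndepFun_iff_condIndep]
  refine condIndep_of_condIndep_of_le_right
    (condIndep_generateFrom_singleton_of_stronglyMeasurable_condExp heX hX.comap_le
      (hZ (measurableSet_singleton 1)) ?_) hZgen
  rw [hBe]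
  exact (comap_measurable e).stronglyMeasurable
end

section
/- Within a propensity-score stratum, treatment assignment is as-if randomized with probability c: for every real number c and every measurable set A ⊆ ℝ^d, ℙ({X ∈ A} ∩ {Z = 1} ∩ {e = c}) = c · ℙ({X ∈ A} ∩ {e = c}). In particular (taking A = ℝ^d), ℙ({Z = 1} ∩ {e = c}) = c · ℙ({e = c}), so every unit in the stratum {e = c} has probability c of being treated. -/
/-!
Since `Z` is `{0,1}`-valued, `∫_S Z dℙ = ℙ(S ∩ {Z = 1})` for every event `S`. If moreover `S` lies
in `σ(X)` and inside the stratum `{e = c}`, the defining property of the conditional expectation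
gives `∫_S Z dℙ = ∫_S e dℙ = c ℙ(S)`. Take `S = {X ∈ A} ∩ {e = c}`, which is in `σ(X)` because
`e` is `σ(X)`-measurable.
-/

open MeasureTheory ProbabilityTheory

section

variable {Ω : Type*} {m m₀ : MeasurableSpace Ω} {μ : Measure Ω}

lemma eq_indicator_of_eq_zero_or_one {Z : Ω → ℝ} (hZ01 : ∀ ω, Z ω = 0 ∨ Z ω = 1) :
    Z = {ω | Z ω = 1}.indicator 1 := by
  funext ω
  rcases hZ01 ω with h | h <;> simp [Set.indicator, h]

lemma setIntegral_eq_measureReal_inter_of_eq_zero_or_one {Z : Ω → ℝ}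
    (hZ : MeasurableSet {ω | Z ω = 1}) (hZ01 : ∀ ω, Z ω = 0 ∨ Z ω = 1) (S : Set Ω) :
    ∫ ω in S, Z ω ∂μ = μ.real (S ∩ {ω | Z ω = 1}) := by
  conv_lhs => rw [eq_indicator_of_eq_zero_or_one hZ01]
  rw [setIntegral_indicator hZ]
  simp

lemma integrable_of_eq_zero_or_one [IsFiniteMeasure μ] {Z : Ω → ℝ} (hZ : Measurable Z)
    (hZ01 : ∀ ω, Z ω = 0 ∨ Z ω = 1) : Integrable Z μ :=
  .of_bound hZ.aestronglyMeasurable 1 <| .of_forall fun ω => by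
    rcases hZ01 ω with h | h <;> simp [h]

lemma setIntegral_eq_mul_measureReal_of_condExp_eqOn (hm : m ≤ m₀) [SigmaFinite (μ.trim hm)]
    {f : Ω → ℝ} (hf : Integrable f μ) {S : Set Ω} (hS : MeasurableSet[m] S) {c : ℝ}
    (hc : Set.EqOn μ[f|m] (fun _ => c) S) :
    ∫ ω in S, f ω ∂μ = c * μ.real S := by
  rw [← setIntegral_condExp hm hf hS, setIntegral_congr_fun (hm _ hS) hc, setIntegral_const,
    smul_eq_mul, mul_comm]

lemma measureReal_inter_eq_mul_of_condExp_eqOn [IsFiniteMeasure μ] (hm : m ≤ m₀) {Z : Ω → ℝ}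
    (hZ : Measurable Z) (hZ01 : ∀ ω, Z ω = 0 ∨ Z ω = 1) {S : Set Ω} (hS : MeasurableSet[m] S)
    {c : ℝ} (hc : Set.EqOn μ[Z|m] (fun _ => c) S) :
    μ.real (S ∩ {ω | Z ω = 1}) = c * μ.real S := by
  have : IsFiniteMeasure (μ.trim hm) := isFiniteMeasure_trim hm
  rw [← setIntegral_eq_measureReal_inter_of_eq_zero_or_one (hZ (measurableSet_singleton 1)) hZ01,
    setIntegral_eq_mul_measureReal_of_condExp_eqOn hm (integrable_of_eq_zero_or_one hZ hZ01) hS hc]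

end

/-- Within a propensity-score stratum, treatment assignment is as-if randomized with
probability `c`: for every real `c` and every measurable `A ⊆ ℝ^d`,
`ℙ({X ∈ A} ∩ {Z = 1} ∩ {e = c}) = c · ℙ({X ∈ A} ∩ {e = c})`. -/
theorem prob_treated_inter_propensity_stratum
    {Ω : Type*} [MeasurableSpace Ω] (μ : Measure Ω) [IsProbabilityMeasure μ]
    {d : ℕ} (X : Ω → (Fin d → ℝ)) (Z : Ω → ℝ)
    (hX : Measurable X) (hZ : Measurable Z)
    (hZ01 : ∀ ω, Z ω = 0 ∨ Z ω = 1)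
    (e : Ω → ℝ) (he : e = μ[Z | MeasurableSpace.comap X inferInstance])
    (c : ℝ) (A : Set (Fin d → ℝ)) (hA : MeasurableSet A) :
    (μ (X ⁻¹' A ∩ {ω | Z ω = 1} ∩ {ω | e ω = c})).toReal
      = c * (μ (X ⁻¹' A ∩ {ω | e ω = c})).toReal := by
  have he_meas : StronglyMeasurable[MeasurableSpace.comap X inferInstance] e :=
    he ▸ stronglyMeasurable_condExp
  have hS : MeasurableSet[MeasurableSpace.comap X inferInstance] (X ⁻¹' A ∩ {ω | e ω = c}) :=
    (comap_measurable X hA).inter (he_meas.measurable (measurableSet_singleton c))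
  have hc : Set.EqOn e (fun _ => c) (X ⁻¹' A ∩ {ω | e ω = c}) := fun _ hω => hω.2
  rw [Set.inter_right_comm]
  exact measureReal_inter_eq_mul_of_condExp_eqOn hX.comap_le hZ hZ01 hS (he ▸ hc)
end

section
/- Unconfoundedness given the covariates descends to the propensity score: if the pair of potential outcomes (Y₀, Y₁) is conditionally independent of the treatment indicator Z given the σ-algebra σ(X) generated by the covariates, then (Y₀, Y₁) is conditionally independent of Z given the σ-algebra σ(e) generated by the propensity score. -/
open MeasureTheory ProbabilityTheory

/-!
Since `Z` takes only the values `0` and `1`, `σ(Z)` is generated by the single event `B = {Z = 1}`,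
whose conditional probability given `σ(X)` is `e`. As `σ(e) ≤ σ(X)` and `e` is `σ(e)`-measurable,
the tower property and pulling `e` out give, for every `A ∈ σ(Y₀, Y₁)`,
`ℙ(A ∩ B | σ(e)) = 𝔼[ℙ(A | σ(X)) e | σ(e)] = ℙ(A | σ(e)) e = ℙ(A | σ(e)) ℙ(B | σ(e))`,
and the π-λ theorem extends this from `B` to all of `σ(Z)`.
-/

theorem eq_indicator_preimage_one {Ω M : Type*} [Zero M] [One M] {Z : Ω → M}
    (hZ01 : ∀ ω, Z ω = 0 ∨ Z ω = 1) : Z = (Z ⁻¹' {1}).indicator 1 := by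
  funext ω
  by_cases h1 : Z ω = 1
  · simp [h1]
  · simp [Set.indicator_of_notMem (show ω ∉ Z ⁻¹' {1} from h1), (hZ01 ω).resolve_right h1]

theorem measurable_generateFrom_preimage_one {Ω M : Type*} [Zero M] [One M] [MeasurableSpace M]
    {Z : Ω → M} (hZ01 : ∀ ω, Z ω = 0 ∨ Z ω = 1) :
    Measurable[MeasurableSpace.generateFrom {Z ⁻¹' {1}}] Z := by
  have h := (measurable_const : Measurable[.generateFrom {Z ⁻¹' {1}}] fun _ : Ω => (1 : M)).indicator
    (MeasurableSpace.measurableSet_generateFrom (Set.mem_singleton (Z ⁻¹' {1})))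
  rwa [← Pi.one_def, ← eq_indicator_preimage_one hZ01] at h

namespace ProbabilityTheory

variable {Ω : Type*} {m m' mΩ : MeasurableSpace Ω} {μ : Measure Ω} [IsFiniteMeasure μ]

theorem condExp_inter_ae_eq_mul_of_le (hm'm : m' ≤ m) (hm : m ≤ mΩ) {s t : Set Ω}
    (ht : StronglyMeasurable[m'] (μ⟦t | m⟧))
    (hst : μ⟦s ∩ t | m⟧ =ᵐ[μ] μ⟦s | m⟧ * μ⟦t | m⟧) :
    μ⟦s ∩ t | m'⟧ =ᵐ[μ] μ⟦s | m'⟧ * μ⟦t | m'⟧ := by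
  have h_tower : ∀ u : Set Ω, μ[μ⟦u | m⟧ | m'] =ᵐ[μ] μ⟦u | m'⟧ := fun _ =>
    condExp_condExp_of_le hm'm hm
  have ht_eq : μ⟦t | m'⟧ =ᵐ[μ] μ⟦t | m⟧ := by
    rw [← condExp_of_stronglyMeasurable (hm'm.trans hm) ht integrable_condExp]
    exact (h_tower t).symm
  have hs_bdd : ∀ᵐ ω ∂μ, ‖(μ⟦s | m⟧) ω‖ ≤ 1 := by
    refine ae_bdd_abs_condExp_of_ae_bdd_abs (Filter.Eventually.of_forall fun ω => ?_)
    by_cases hω : ω ∈ s <;> simp [hω]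
  have h_int : Integrable (μ⟦s | m⟧ * μ⟦t | m⟧) μ :=
    integrable_condExp.bdd_mul (stronglyMeasurable_condExp.mono hm).aestronglyMeasurable hs_bdd
  calc μ⟦s ∩ t | m'⟧ =ᵐ[μ] μ[μ⟦s ∩ t | m⟧ | m'] := (h_tower _).symm
    _ =ᵐ[μ] μ[μ⟦s | m⟧ * μ⟦t | m⟧ | m'] := condExp_congr_ae hst
    _ =ᵐ[μ] μ[μ⟦s | m⟧ | m'] * μ⟦t | m⟧ :=
      condExp_mul_of_stronglyMeasurable_right ht h_int integrable_condExp
    _ =ᵐ[μ] μ⟦s | m'⟧ * μ⟦t | m'⟧ := (h_tower s).mul ht_eq.symm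

variable [StandardBorelSpace Ω] {hm : m ≤ mΩ} {hm' : m' ≤ mΩ}

theorem CondIndepSets.of_le_of_stronglyMeasurable_condExp (hm'm : m' ≤ m) {S T : Set (Set Ω)}
    (hS : ∀ s ∈ S, MeasurableSet s) (hT : ∀ t ∈ T, MeasurableSet t)
    (hTm' : ∀ t ∈ T, StronglyMeasurable[m'] (μ⟦t | m⟧)) (h : CondIndepSets m hm S T μ) :
    CondIndepSets m' hm' S T μ := by
  rw [condIndepSets_iff _ _ _ _ hS hT] at h ⊢
  exact fun s t hs ht => condExp_inter_ae_eq_mul_of_le hm'm hm (hTm' t ht) (h s t hs ht)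

theorem CondIndepFun.of_le_of_stronglyMeasurable_condExp {β : Type*} [MeasurableSpace β]
    {f : Ω → β} {Z : Ω → ℝ} (hf : Measurable f) (hZ : Measurable Z)
    (hZ01 : ∀ ω, Z ω = 0 ∨ Z ω = 1) (hm'm : m' ≤ m) (hZm' : StronglyMeasurable[m'] (μ[Z | m]))
    (h : CondIndepFun m hm f Z μ) : CondIndepFun m' hm' f Z μ := by
  have hB : MeasurableSet (Z ⁻¹' {1}) := hZ (measurableSet_singleton 1)
  have hB_condExp : StronglyMeasurable[m'] (μ⟦Z ⁻¹' {1} | m⟧) := by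
    rwa [← Pi.one_def, ← eq_indicator_preimage_one hZ01]
  rw [condIndepFun_iff_condIndep] at h ⊢
  have h_sets : CondIndepSets m hm {s | MeasurableSet[.comap f inferInstance] s} {Z ⁻¹' {1}} μ :=
    condIndepSets_of_condIndepSets_of_le_right ((condIndep_iff_condIndepSets ..).1 h)
      (Set.singleton_subset_iff.2 ⟨{1}, measurableSet_singleton 1, rfl⟩)
  refine condIndep_of_condIndep_of_le_right ?_ (measurable_generateFrom_preimage_one hZ01).comap_le
  refine CondIndepSets.condIndep hf.comap_le
    (MeasurableSpace.generateFrom_le (by rintro t rfl; exact hB))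
    (@MeasurableSpace.isPiSystem_measurableSet Ω (.comap f inferInstance)) (.singleton _)
    (@MeasurableSpace.generateFrom_measurableSet Ω (.comap f inferInstance)).symm rfl ?_
  exact h_sets.of_le_of_stronglyMeasurable_condExp hm'm (fun _ hs => hf.comap_le _ hs)
    (by rintro t rfl; exact hB) (by rintro t rfl; exact hB_condExp)

end ProbabilityTheory

/-- Unconfoundedness given the covariates descends to the propensity score: if `(Y₀, Y₁)` is
conditionally independent of `Z` given `σ(X)`, then `(Y₀, Y₁)` is conditionally independent of
`Z` given `σ(e)`, where `e := 𝔼[Z | σ(X)]` is the propensity score. -/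
theorem condIndepFun_potentialOutcomes_treatment_given_propensity
    {Ω : Type*} [MeasurableSpace Ω] [StandardBorelSpace Ω]
    (μ : Measure Ω) [IsProbabilityMeasure μ]
    {d : ℕ} (X : Ω → (Fin d → ℝ)) (Z : Ω → ℝ) (Y₀ Y₁ : Ω → ℝ)
    (hX : Measurable X) (hZ : Measurable Z) (hY₀ : Measurable Y₀) (hY₁ : Measurable Y₁)
    (hZ01 : ∀ ω, Z ω = 0 ∨ Z ω = 1)
    (e : Ω → ℝ) (he : e = μ[Z | MeasurableSpace.comap X inferInstance])
    (hme : MeasurableSpace.comap e inferInstance ≤ ‹MeasurableSpace Ω›)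
    (hunconf : CondIndepFun (MeasurableSpace.comap X inferInstance) hX.comap_le
      (fun ω => (Y₀ ω, Y₁ ω)) Z μ) :
    CondIndepFun (MeasurableSpace.comap e inferInstance) hme
      (fun ω => (Y₀ ω, Y₁ ω)) Z μ := by
  subst he
  exact hunconf.of_le_of_stronglyMeasurable_condExp (hY₀.prodMk hY₁) hZ hZ01
    stronglyMeasurable_condExp.measurable.comap_le (comap_measurable _).stronglyMeasurable
end

section
/- Within-stratum identification of the causal effect (validity of 'cloning' within a propensity-score bin): assume the pair of potential outcomes (Y₀, Y₁) is conditionally independent of Z given σ(X), Y₀ and Y₁ are integrable, and let Y := Z·Y₁ + (1−Z)·Y₀ be the observed outcome. Let c ∈ (0,1) be such that ℙ({e = c}) > 0. Then the difference between the mean observed outcome of treated units in the stratum and the mean observed outcome of untreated units in the stratum equals the mean causal effect in the stratum: (∫_{{Z=1}∩{e=c}} Y dℙ)/ℙ({Z=1} ∩ {e=c}) − (∫_{{Z=0}∩{e=c}} Y dℙ)/ℙ({Z=0} ∩ {e=c}) = (∫_{{e=c}} (Y₁ − Y₀) dℙ)/ℙ({e = c}) (the denominators ℙ({Z=1} ∩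 {e=c}) = c·ℙ({e=c}) and ℙ({Z=0} ∩ {e=c}) = (1−c)·ℙ({e=c}) being positive). -/
open MeasureTheory ProbabilityTheory

/-!
Unconfoundedness says `ℙ(V ∈ s, Z ∈ t | σ(X)) = ℙ(V ∈ s | σ(X)) ℙ(Z ∈ t | σ(X))` for the
pair `V = (Y₀, Y₁)`. On the stratum `A = {e = c}`, which lies in `σ(X)`, the second factor is
the constant `c` (for `t = {1}`) or `1 - c` (for `t = {0}`), so integrating over `A` shows that
the law of `V` on `{Z = t} ∩ A` is that constant times its law on `A`. Within the stratum each
arm is therefore a rescaled copy ("clone") of the whole stratum: the treated mean of `Y = Y₁`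
and the untreated mean of `Y = Y₀` are the stratum means of `Y₁` and `Y₀`.
-/

lemma integral_comp_eq_smul_of_map_eq_smul {Ω β E : Type*} [MeasurableSpace Ω]
    [MeasurableSpace β] [NormedAddCommGroup E] [NormedSpace ℝ E] {ν ν' : Measure Ω} {V : Ω → β}
    {f : β → E} {r : ℝ} (hr : 0 ≤ r) (hV : Measurable V) (hf : StronglyMeasurable f)
    (h : ν.map V = ENNReal.ofReal r • ν'.map V) :
    ∫ ω, f (V ω) ∂ν = r • ∫ ω, f (V ω) ∂ν' := by
  rw [← integral_map hV.aemeasurable hf.aestronglyMeasurable, h, integral_smul_measure,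
    integral_map hV.aemeasurable hf.aestronglyMeasurable, ENNReal.toReal_ofReal hr]

section

variable {Ω β : Type*} {m mΩ : MeasurableSpace Ω} {μ : Measure Ω} [IsFiniteMeasure μ]
  {A S : Set Ω}

lemma measureReal_inter_eq_setIntegral_condExp (hm : m ≤ mΩ) (hS : MeasurableSet S)
    (hA : MeasurableSet[m] A) : μ.real (S ∩ A) = ∫ ω in A, (μ⟦S | m⟧) ω ∂μ := by
  rw [setIntegral_condExp hm ((integrable_const (1 : ℝ)).indicator hS) hA,
    integral_indicator_const _ hS, measureReal_restrict_apply hS, smul_eq_mul, mul_one]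

lemma measureReal_inter_inter_eq_mul_of_condExp {B T : Set Ω} {r : ℝ} (hm : m ≤ mΩ)
    (hB : MeasurableSet B) (hT : MeasurableSet T) (hA : MeasurableSet[m] A)
    (hBT : μ⟦B ∩ T | m⟧ =ᵐ[μ] fun ω ↦ (μ⟦B | m⟧) ω * (μ⟦T | m⟧) ω)
    (hTA : μ⟦T | m⟧ =ᵐ[μ.restrict A] fun _ ↦ r) :
    μ.real (B ∩ T ∩ A) = r * μ.real (B ∩ A) :=
  calc μ.real (B ∩ T ∩ A) = ∫ ω in A, (μ⟦B ∩ T | m⟧) ω ∂μ :=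
        measureReal_inter_eq_setIntegral_condExp hm (hB.inter hT) hA
    _ = ∫ ω in A, (μ⟦B | m⟧) ω * r ∂μ := by
        refine integral_congr_ae ?_
        filter_upwards [ae_restrict_of_ae hBT, hTA] with ω hBTω hTω
        rw [hBTω, hTω]
    _ = r * μ.real (B ∩ A) := by
        rw [integral_mul_const, mul_comm, measureReal_inter_eq_setIntegral_condExp hm hB hA]

variable [StandardBorelSpace Ω] {γ : Type*} [MeasurableSpace β] [MeasurableSpace γ]
  {hm : m ≤ mΩ} {V : Ω → β} {Z : Ω → γ} {t : Set γ} {r : ℝ}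

theorem ProbabilityTheory.CondIndepFun.map_restrict_preimage_inter_eq_smul
    (h : CondIndepFun m hm V Z μ) (hV : Measurable V) (hZ : Measurable Z)
    (ht : MeasurableSet t) (hA : MeasurableSet[m] A)
    (hr : 0 ≤ r) (hZA : μ⟦Z ⁻¹' t | m⟧ =ᵐ[μ.restrict A] fun _ ↦ r) :
    (μ.restrict (Z ⁻¹' t ∩ A)).map V = ENNReal.ofReal r • (μ.restrict A).map V := by
  ext s hs
  have hBT := (condIndepFun_iff_condExp_inter_preimage_eq_mul hV hZ).mp h s t hs ht
  rw [Measure.map_apply hV hs, Measure.smul_apply, Measure.map_apply hV hs,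
    Measure.restrict_apply (hV hs), Measure.restrict_apply (hV hs), smul_eq_mul,
    ← Set.inter_assoc, ← ofReal_measureReal, ← ofReal_measureReal,
    measureReal_inter_inter_eq_mul_of_condExp hm (hV hs) (hZ ht) hA hBT hZA,
    ENNReal.ofReal_mul hr]

theorem ProbabilityTheory.CondIndepFun.setIntegral_preimage_inter_div_eq
    (h : CondIndepFun m hm V Z μ) (hV : Measurable V) (hZ : Measurable Z)
    (ht : MeasurableSet t) (hA : MeasurableSet[m] A)
    (hr : 0 < r) (hZA : μ⟦Z ⁻¹' t | m⟧ =ᵐ[μ.restrict A] fun _ ↦ r) {f : β → ℝ}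
    (hf : Measurable f) :
    (∫ ω in Z ⁻¹' t ∩ A, f (V ω) ∂μ) / μ.real (Z ⁻¹' t ∩ A)
      = (∫ ω in A, f (V ω) ∂μ) / μ.real A := by
  have hmap := h.map_restrict_preimage_inter_eq_smul hV hZ ht hA hr.le hZA
  have hmeasure : μ.real (Z ⁻¹' t ∩ A) = r * μ.real A := by
    simpa using integral_comp_eq_smul_of_map_eq_smul hr.le hV
      (stronglyMeasurable_const (b := (1 : ℝ))) hmap
  rw [integral_comp_eq_smul_of_map_eq_smul hr.le hV hf.stronglyMeasurable hmap, hmeasure,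
    smul_eq_mul, mul_div_mul_left _ _ hr.ne']

end

section

variable {Ω : Type*} {Z : Ω → ℝ}

lemma indicator_preimage_one_eq_self (hZ : ∀ ω, Z ω = 0 ∨ Z ω = 1) :
    (Z ⁻¹' {1}).indicator (fun _ ↦ (1 : ℝ)) = Z := by
  ext ω
  rcases hZ ω with h | h <;> simp [Set.indicator, h]

lemma indicator_preimage_zero_eq_one_sub (hZ : ∀ ω, Z ω = 0 ∨ Z ω = 1) :
    (Z ⁻¹' {0}).indicator (fun _ ↦ (1 : ℝ)) = 1 - Z := by
  ext ω
  rcases hZ ω with h | h <;> simp [Set.indicator, h]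

variable {m mΩ : MeasurableSpace Ω} {μ : Measure Ω}

lemma condExp_indicator_preimage_zero_ae_eq [IsFiniteMeasure μ] (hm : m ≤ mΩ)
    (hZm : Measurable Z) (hZ : ∀ ω, Z ω = 0 ∨ Z ω = 1) :
    μ⟦Z ⁻¹' {0} | m⟧ =ᵐ[μ] 1 - μ[Z | m] := by
  have hZint : Integrable Z μ := indicator_preimage_one_eq_self hZ ▸
    (integrable_const (1 : ℝ)).indicator (hZm (measurableSet_singleton 1))
  rw [indicator_preimage_zero_eq_one_sub hZ]
  exact (condExp_sub (integrable_const 1) hZint m).trans (by rw [condExp_const hm]; rfl)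

end

theorem within_stratum_identification_general
    {Ω : Type*} [MeasurableSpace Ω] [StandardBorelSpace Ω]
    (μ : Measure Ω) [IsProbabilityMeasure μ]
    {d : ℕ} (X : Ω → (Fin d → ℝ)) (Z : Ω → ℝ) (Y₀ Y₁ : Ω → ℝ)
    (hX : Measurable X) (hZ : Measurable Z) (hY₀ : Measurable Y₀) (hY₁ : Measurable Y₁)
    (hZ01 : ∀ ω, Z ω = 0 ∨ Z ω = 1)
    (hY₀int : Integrable Y₀ μ) (hY₁int : Integrable Y₁ μ)
    (e : Ω → ℝ) (he : e = μ[Z | MeasurableSpace.comap X inferInstance])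
    (hunconf : CondIndepFun (MeasurableSpace.comap X inferInstance) hX.comap_le
      (fun ω => (Y₀ ω, Y₁ ω)) Z μ)
    (Y : Ω → ℝ) (hY : Y = fun ω => Z ω * Y₁ ω + (1 - Z ω) * Y₀ ω)
    (c : ℝ) (hc0 : 0 < c) (hc1 : c < 1) :
    (∫ ω in {ω | Z ω = 1} ∩ {ω | e ω = c}, Y ω ∂μ)
        / (μ ({ω | Z ω = 1} ∩ {ω | e ω = c})).toReal
      - (∫ ω in {ω | Z ω = 0} ∩ {ω | e ω = c}, Y ω ∂μ)
        / (μ ({ω | Z ω = 0} ∩ {ω | e ω = c})).toReal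
      = (∫ ω in {ω | e ω = c}, (Y₁ ω - Y₀ ω) ∂μ) / (μ {ω | e ω = c}).toReal := by
  set A := {ω | e ω = c}
  have hAX : MeasurableSet[MeasurableSpace.comap X inferInstance] A :=
    (he ▸ stronglyMeasurable_condExp).measurable (measurableSet_singleton c)
  have hA : MeasurableSet A := hX.comap_le _ hAX
  have he_A : e =ᵐ[μ.restrict A] fun _ ↦ c := (ae_restrict_mem hA).mono fun _ hω ↦ hω
  have htreated : μ⟦Z ⁻¹' {1} | MeasurableSpace.comap X inferInstance⟧
      =ᵐ[μ.restrict A] fun _ ↦ c := by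
    rwa [indicator_preimage_one_eq_self hZ01, ← he]
  have huntreated : μ⟦Z ⁻¹' {0} | MeasurableSpace.comap X inferInstance⟧
      =ᵐ[μ.restrict A] fun _ ↦ 1 - c := by
    filter_upwards [ae_restrict_of_ae
      (condExp_indicator_preimage_zero_ae_eq hX.comap_le hZ hZ01), he_A] with ω hω heω
    rw [hω, ← he, Pi.sub_apply, heω, Pi.one_apply]
  have hYtreated : ∫ ω in Z ⁻¹' {1} ∩ A, Y ω ∂μ = ∫ ω in Z ⁻¹' {1} ∩ A, Y₁ ω ∂μ :=
    setIntegral_congr_fun ((hZ (measurableSet_singleton 1)).inter hA)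
      fun ω hω ↦ by simp [hY, show Z ω = 1 from hω.1]
  have hYuntreated : ∫ ω in Z ⁻¹' {0} ∩ A, Y ω ∂μ = ∫ ω in Z ⁻¹' {0} ∩ A, Y₀ ω ∂μ :=
    setIntegral_congr_fun ((hZ (measurableSet_singleton 0)).inter hA)
      fun ω hω ↦ by simp [hY, show Z ω = 0 from hω.1]
  simp only [← measureReal_def]
  change (∫ ω in Z ⁻¹' {1} ∩ A, Y ω ∂μ) / μ.real (Z ⁻¹' {1} ∩ A)
      - (∫ ω in Z ⁻¹' {0} ∩ A, Y ω ∂μ) / μ.real (Z ⁻¹' {0} ∩ A) = _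
  have hV : Measurable fun ω ↦ (Y₀ ω, Y₁ ω) := hY₀.prodMk hY₁
  rw [hYtreated, hYuntreated,
    hunconf.setIntegral_preimage_inter_div_eq hV hZ (measurableSet_singleton 1) hAX hc0
      htreated measurable_snd,
    hunconf.setIntegral_preimage_inter_div_eq hV hZ (measurableSet_singleton 0) hAX
      (sub_pos.mpr hc1) huntreated measurable_fst,
    integral_sub hY₁int.integrableOn hY₀int.integrableOn, sub_div]

/-- Within-stratum identification of the causal effect (validity of "cloning" within a
propensity-score bin): under unconfoundedness given `σ(X)`, for `c ∈ (0,1)` with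
`ℙ({e = c}) > 0`, the difference of the mean observed outcome between treated and untreated
units in the stratum `{e = c}` equals the mean causal effect in that stratum. -/
theorem within_stratum_identification
    {Ω : Type*} [MeasurableSpace Ω] [StandardBorelSpace Ω]
    (μ : Measure Ω) [IsProbabilityMeasure μ]
    {d : ℕ} (X : Ω → (Fin d → ℝ)) (Z : Ω → ℝ) (Y₀ Y₁ : Ω → ℝ)
    (hX : Measurable X) (hZ : Measurable Z) (hY₀ : Measurable Y₀) (hY₁ : Measurable Y₁)
    (hZ01 : ∀ ω, Z ω = 0 ∨ Z ω = 1)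
    (hY₀int : Integrable Y₀ μ) (hY₁int : Integrable Y₁ μ)
    (e : Ω → ℝ) (he : e = μ[Z | MeasurableSpace.comap X inferInstance])
    (hunconf : CondIndepFun (MeasurableSpace.comap X inferInstance) hX.comap_le
      (fun ω => (Y₀ ω, Y₁ ω)) Z μ)
    (Y : Ω → ℝ) (hY : Y = fun ω => Z ω * Y₁ ω + (1 - Z ω) * Y₀ ω)
    (c : ℝ) (hc0 : 0 < c) (hc1 : c < 1)
    (hpos : 0 < μ {ω | e ω = c}) :
    (∫ ω in {ω | Z ω = 1} ∩ {ω | e ω = c}, Y ω ∂μ)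
        / (μ ({ω | Z ω = 1} ∩ {ω | e ω = c})).toReal
      - (∫ ω in {ω | Z ω = 0} ∩ {ω | e ω = c}, Y ω ∂μ)
        / (μ ({ω | Z ω = 0} ∩ {ω | e ω = c})).toReal
      = (∫ ω in {ω | e ω = c}, (Y₁ ω - Y₀ ω) ∂μ) / (μ {ω | e ω = c}).toReal :=
  within_stratum_identification_general μ X Z Y₀ Y₁ hX hZ hY₀ hY₁ hZ01 hY₀int hY₁int e he hunconf Y
    hY c hc0 hc1
end

section
/- Sufficiency direction of the balancing-score characterization (Rosenbaum–Rubin): let b : ℝ^d → ℝ^k be measurable. If the propensity score is determined by b(X), in the sense that 𝔼[Z | σ(X)] = 𝔼[Z | σ(b ∘ X)] ℙ-a.e., then b(X) is a balancing score: the covariates X and the treatment indicator Z are conditionally independent given σ(b ∘ X). -/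
/-!
Since `Z` takes only the values `0` and `1`, the indicator of every event `{Z ∈ t}` is an affine
function of `Z`, so the hypothesis upgrades to `ℙ(Z ∈ t | X) = ℙ(Z ∈ t | b(X))`. For an event
`{X ∈ s}`, which is `σ(X)`-measurable, the tower property through `σ(X)` and pulling out known
factors then give `ℙ(X ∈ s, Z ∈ t | b(X)) = ℙ(X ∈ s | b(X)) ℙ(Z ∈ t | b(X))`.
-/

open MeasureTheory ProbabilityTheory

section

variable {Ω : Type*} {m m' mΩ : MeasurableSpace Ω} {μ : Measure Ω} [IsFiniteMeasure μ]

theorem indicator_preimage_eq_of_zero_or_one {Z : Ω → ℝ}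
    (hZ01 : ∀ ω, Z ω = 0 ∨ Z ω = 1) (t : Set ℝ) :
    (Z ⁻¹' t).indicator (fun _ ↦ (1 : ℝ)) =
      fun ω ↦ t.indicator 1 0 + (t.indicator 1 1 - t.indicator 1 0) * Z ω := by
  funext ω
  rw [show (Z ⁻¹' t).indicator (fun _ ↦ (1 : ℝ)) ω = t.indicator 1 (Z ω) from
    Set.indicator_comp_right (g := 1) Z]
  rcases hZ01 ω with h | h <;> simp [h]

theorem condExp_const_add_mul_ae_eq (hm : m ≤ mΩ) {Z : Ω → ℝ} (hZ : Integrable Z μ) (a c : ℝ) :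
    μ[fun ω ↦ a + c * Z ω | m] =ᵐ[μ] fun ω ↦ a + c * μ[Z | m] ω := by
  rw [show (fun ω ↦ a + c * Z ω) = (fun _ ↦ a) + c • Z from rfl]
  filter_upwards [condExp_add (integrable_const a) (hZ.smul c) m, condExp_smul c Z m]
    with ω hadd hsmul
  rw [hadd, Pi.add_apply, hsmul, condExp_const hm]
  rfl

theorem condExp_mul_ae_eq_mul_condExp_of_condExp_ae_eq (hm' : m' ≤ m) (hm : m ≤ mΩ)
    {f g : Ω → ℝ} (hf : StronglyMeasurable[m] f) {C : ℝ} (hfC : ∀ ω, ‖f ω‖ ≤ C)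
    (hg : Integrable g μ) (hgm : μ[g | m] =ᵐ[μ] μ[g | m']) :
    μ[f * g | m'] =ᵐ[μ] μ[f | m'] * μ[g | m'] := by
  have hf_ae : AEStronglyMeasurable f μ := (hf.mono hm).aestronglyMeasurable
  have hf_int : Integrable f μ := .of_bound hf_ae C (ae_of_all _ hfC)
  calc μ[f * g | m']
      =ᵐ[μ] μ[μ[f * g | m] | m'] := (condExp_condExp_of_le hm' hm).symm
    _ =ᵐ[μ] μ[f * μ[g | m'] | m'] := by
      refine condExp_congr_ae ?_
      filter_upwards [condExp_stronglyMeasurable_mul_of_bound hm hf hg C (ae_of_all _ hfC), hgm]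
        with ω hpull hω
      rw [hpull, Pi.mul_apply, Pi.mul_apply, hω]
    _ =ᵐ[μ] μ[f | m'] * μ[g | m'] :=
      condExp_mul_of_stronglyMeasurable_right stronglyMeasurable_condExp
        (integrable_condExp.bdd_mul hf_ae (ae_of_all _ hfC)) hf_int

theorem condIndepFun_of_condExp_indicator_preimage_ae_eq [StandardBorelSpace Ω]
    {β γ : Type*} [mβ : MeasurableSpace β] [MeasurableSpace γ] {f : Ω → β} {g : Ω → γ}
    (hf : Measurable f) (hg : Measurable g) (hm'f : m' ≤ mβ.comap f) (hm' : m' ≤ mΩ)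
    (h : ∀ t, MeasurableSet t → μ⟦g ⁻¹' t | mβ.comap f⟧ =ᵐ[μ] μ⟦g ⁻¹' t | m'⟧) :
    CondIndepFun m' hm' f g μ := by
  rw [condIndepFun_iff_condExp_inter_preimage_eq_mul hf hg]
  intro s t hs ht
  have hfs : StronglyMeasurable[mβ.comap f] ((f ⁻¹' s).indicator fun _ ↦ (1 : ℝ)) :=
    stronglyMeasurable_const.indicator ⟨s, hs, rfl⟩
  have hbound : ∀ ω, ‖(f ⁻¹' s).indicator (fun _ ↦ (1 : ℝ)) ω‖ ≤ 1 :=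
    fun ω ↦ norm_indicator_le_norm_self (fun _ ↦ (1 : ℝ)) ω |>.trans norm_one.le
  have hgt : Integrable ((g ⁻¹' t).indicator fun _ ↦ (1 : ℝ)) μ :=
    (integrable_const 1).indicator (hg ht)
  rw [show (fun _ ↦ (1 : ℝ)) = 1 from rfl, Set.inter_indicator_one]
  exact condExp_mul_ae_eq_mul_condExp_of_condExp_ae_eq hm'f hf.comap_le hfs hbound hgt (h t ht)

end

/-- Sufficiency direction of the balancing-score characterization (Rosenbaum–Rubin): if the
propensity score is determined by `b(X)`, i.e. `𝔼[Z | σ(X)] = 𝔼[Z | σ(b ∘ X)]` a.e., then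
`b(X)` is a balancing score: `X` and `Z` are conditionally independent given `σ(b ∘ X)`. -/
theorem balancingScore_of_condexp_eq
    {Ω : Type*} [MeasurableSpace Ω] [StandardBorelSpace Ω]
    (μ : Measure Ω) [IsProbabilityMeasure μ]
    {d k : ℕ} (X : Ω → (Fin d → ℝ)) (Z : Ω → ℝ) (b : (Fin d → ℝ) → (Fin k → ℝ))
    (hX : Measurable X) (hZ : Measurable Z) (hb : Measurable b)
    (hZ01 : ∀ ω, Z ω = 0 ∨ Z ω = 1)
    (hdet : μ[Z | MeasurableSpace.comap X inferInstance]
      =ᵐ[μ] μ[Z | MeasurableSpace.comap (b ∘ X) inferInstance]) :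
    CondIndepFun (MeasurableSpace.comap (b ∘ X) inferInstance) (hb.comp hX).comap_le X Z μ := by
  have hZint : Integrable Z μ := .of_bound hZ.aestronglyMeasurable 1 (ae_of_all _ fun ω ↦ by
    rcases hZ01 ω with h | h <;> simp [h])
  refine condIndepFun_of_condExp_indicator_preimage_ae_eq hX hZ
    (hb.comp (comap_measurable X)).comap_le _ fun t _ ↦ ?_
  rw [indicator_preimage_eq_of_zero_or_one hZ01 t]
  filter_upwards [condExp_const_add_mul_ae_eq hX.comap_le hZint _ _,
    condExp_const_add_mul_ae_eq (hb.comp hX).comap_le hZint _ _, hdet] with ω hX' hbX hω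
  rw [hX', hbX, hω]
end
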